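/- (Aumann) Let G be a finite extensive game with perfect information without relevant ties, with unique subgame perfect equilibrium s*, and consider any knowledge system for G. Then CK R ⊆ I, i.e., common knowledge of rationality implies that the players' joint strategy is the backward induction (subgame perfect equilibrium) strategy s*. -/

import Mathlib

/-- A finite extensive game with perfect information: a finite rooted tree whose
leaves carry an outcome for each player and whose internal nodes carry the player
to move and a nonempty finite family of children. -/
inductive ExtGame (ι : Type) : Type where
  | leaf : (ι → ℝ) → ExtGame ι
  | node : ι → (m : ℕ) → (Fin (m + 1) → ExtGame ι) → ExtGame ι

namespace ExtGame

variable {ι : Type}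

/-- A strategy of player `i`: at every node where it is `i`'s turn, a choice of a child. -/
def Strategy (i : ι) : ExtGame ι → Type
  | .leaf _ => PUnit
  | .node j m children => (i = j → Fin (m + 1)) × ∀ c : Fin (m + 1), Strategy i (children c)

/-- The outcome (payoff vector) when every player follows his strategy. -/
def outcome : (G : ExtGame ι) → (∀ i, G.Strategy i) → ι → ℝ
  | .leaf o, _ => o
  | .node j _ children, σ =>
      outcome (children ((σ j).1 rfl)) (fun i => (σ i).2 ((σ j).1 rfl))

/-- Nodes of the game tree, identified by the path from the root. -/
inductive Node : ExtGame ι → Type where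
  | root (G : ExtGame ι) : Node G
  | child {j : ι} {m : ℕ} {children : Fin (m + 1) → ExtGame ι}
      (c : Fin (m + 1)) : Node (children c) → Node (.node j m children)

/-- The subgame rooted at a node. -/
def subgameAt : {G : ExtGame ι} → Node G → ExtGame ι
  | _, .root G => G
  | _, .child c v => subgameAt v

/-- The joint strategy of the subgame rooted at `v` induced by a joint strategy. -/
def restrictProfile : {G : ExtGame ι} → (∀ i, G.Strategy i) → (v : Node G) →
    ∀ i, (subgameAt v).Strategy i
  | _, σ, .root _ => σ
  | _, σ, .child c v => restrictProfile (fun i => (σ i).2 c) v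

/-- Nash equilibrium of (the strategic form of) an extensive game. -/
def NashEq [DecidableEq ι] (G : ExtGame ι) (σ : ∀ i, G.Strategy i) : Prop :=
  ∀ (i : ι) (t : G.Strategy i), G.outcome σ i ≥ G.outcome (Function.update σ i t) i

/-- Subgame perfect equilibrium: the induced joint strategy is a Nash equilibrium
in the subgame rooted at every node. -/
def SPE [DecidableEq ι] (G : ExtGame ι) (σ : ∀ i, G.Strategy i) : Prop :=
  ∀ v : Node G, (subgameAt v).NashEq (restrictProfile σ v)

/-- At the root (if it is a non-leaf), the player to move chooses a child whose
subgame outcome (under the induced strategies) is maximal for him. -/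
def BestAtRoot : (G : ExtGame ι) → (∀ i, G.Strategy i) → Prop
  | .leaf _, _ => True
  | .node j _ children, σ =>
      ∀ c, outcome (children ((σ j).1 rfl)) (fun i => (σ i).2 ((σ j).1 rfl)) j ≥
        outcome (children c) (fun i => (σ i).2 c) j

/-- The list of payoff vectors at the leaves of the game tree (one entry per leaf). -/
def leavesList : ExtGame ι → List (ι → ℝ)
  | .leaf o => [o]
  | .node _ _ children => (List.ofFn fun c => leavesList (children c)).flatten

/-- The game is without relevant ties: at every non-leaf node `u` with `turn(u) = i`,
the outcome function of player `i` is injective on the leaves of the subtree rooted at `u`. -/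
def NoRelevantTies : ExtGame ι → Prop
  | .leaf _ => True
  | .node j m children =>
      ((ExtGame.node j m children).leavesList.Pairwise fun o o' => o j ≠ o' j) ∧
      ∀ c, NoRelevantTies (children c)

/-- The player to move at a node (`none` if the node is a leaf). -/
def turnAt {G : ExtGame ι} (v : Node G) : Option ι :=
  match subgameAt v with
  | .leaf _ => none
  | .node j _ _ => some j

end ExtGame


/-- The knowledge operator of player `i`, given his information partition (presented as an
equivalence relation `P i` on the set of states `Ω`): `K_i E` is the union of the blocks of
`i`'s partition included in `E`. -/
def Know {n : ℕ} {Ω : Type} (P : Fin n → Setoid Ω) (i : Fin n) (E : Set Ω) : Set Ω :=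
  {ω | ∀ ω', (P i).r ω ω' → ω' ∈ E}

/-- `K E = ⋂ i, K_i E`: everybody knows `E`. -/
def KnowAll {n : ℕ} {Ω : Type} (P : Fin n → Setoid Ω) (E : Set Ω) : Set Ω :=
  ⋂ i : Fin n, Know P i E

/-- `CK E = ⋂ k ≥ 1, K^k E`: common knowledge of `E`. -/
def CK {n : ℕ} {Ω : Type} (P : Fin n → Setoid Ω) (E : Set Ω) : Set Ω :=
  ⋂ k : ℕ, (KnowAll P)^[k + 1] E

/-- The event that player `i` is rational: for every node `v` at which `i` moves and every
strategy `t_i` of player `i`, `i` does not know that `t_i` would yield him a higher outcome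
in the subgame rooted at `v` than the strategy he chooses according to `𝐬`. -/
def Rational {n : ℕ} {Ω : Type} (G : ExtGame (Fin n)) (P : Fin n → Setoid Ω)
    (st : Ω → ∀ i, G.Strategy i) (i : Fin n) : Set Ω :=
  {ω | ∀ v : ExtGame.Node G, ExtGame.turnAt v = some i → ∀ ti : G.Strategy i,
    ω ∉ Know P i {ω' | (ExtGame.subgameAt v).outcome
          (ExtGame.restrictProfile (Function.update (st ω') i ti) v) i >
        (ExtGame.subgameAt v).outcome (ExtGame.restrictProfile (st ω') v) i}}

/-! Aumann's argument is backward induction carried out inside a self-evident event `C`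
(one that every player knows whenever it occurs), such as `CK R`. By induction on the tree,
the players' strategies agree with `s*` in every proper subgame throughout `C`. At the root the
mover `j` therefore knows, at every state of `C`, the payoff of each of his root moves followed by
`s*`; without relevant ties the backward induction move is strictly best, so a rational `j`
cannot play anything else. -/

namespace ExtGame

variable {ι : Type} {j : ι} {m : ℕ} {children : Fin (m + 1) → ExtGame ι}

def childProfile (σ : ∀ i, (node j m children).Strategy i) (c : Fin (m + 1)) :
    ∀ i, (children c).Strategy i :=
  fun i => (σ i).2 c

theorem outcome_node (σ : ∀ i, (node j m children).Strategy i) :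
    (node j m children).outcome σ =
      (children ((σ j).1 rfl)).outcome (childProfile σ ((σ j).1 rfl)) :=
  rfl

theorem outcome_node_of_rootMove_eq {σ : ∀ i, (node j m children).Strategy i} {c : Fin (m + 1)}
    (hc : (σ j).1 rfl = c) :
    (node j m children).outcome σ = (children c).outcome (childProfile σ c) := by
  subst hc
  rfl

theorem profile_ext {σ τ : ∀ i, (node j m children).Strategy i}
    (hroot : (σ j).1 rfl = (τ j).1 rfl) (hchild : ∀ c, childProfile σ c = childProfile τ c) :
    σ = τ := by
  funext i
  refine Prod.ext (funext fun h => ?_) (funext fun c => congrFun (hchild c) i)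
  subst h
  exact hroot

theorem childProfile_update [DecidableEq ι] (σ : ∀ i, (node j m children).Strategy i) (i : ι)
    (t : (node j m children).Strategy i) (c : Fin (m + 1)) :
    childProfile (Function.update σ i t) c = Function.update (childProfile σ c) i (t.2 c) :=
  funext fun k => Function.apply_update (fun _ s => s.2 c) σ i t k

theorem update_childProfile_self [DecidableEq ι] (σ : ∀ i, (node j m children).Strategy i)
    (i : ι) (c : Fin (m + 1)) :
    Function.update (childProfile σ c) i ((σ i).2 c) = childProfile σ c :=
  Function.update_eq_self i _

def Strategy.updateChild {i : ι} (s : (node j m children).Strategy i) (c : Fin (m + 1))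
    (t : (children c).Strategy i) : (node j m children).Strategy i :=
  ⟨s.1, Function.update s.2 c t⟩

theorem Strategy.updateChild_snd_self {i : ι} (s : (node j m children).Strategy i)
    (c : Fin (m + 1)) (t : (children c).Strategy i) : (s.updateChild c t).2 c = t :=
  Function.update_self (β := fun c => (children c).Strategy i) c t s.2

def Strategy.ofRootMove (c : Fin (m + 1)) (τ : ∀ c, (children c).Strategy j) :
    (node j m children).Strategy j :=
  ⟨fun _ => c, τ⟩

theorem outcome_update_ofRootMove [DecidableEq ι] (σ : ∀ i, (node j m children).Strategy i)
    (c : Fin (m + 1)) (τ : ∀ c, (children c).Strategy j) :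
    (node j m children).outcome (Function.update σ j (.ofRootMove c τ)) =
      (children c).outcome (Function.update (childProfile σ c) j (τ c)) := by
  have hmove : (Function.update σ j (.ofRootMove c τ) j).1 rfl = c :=
    congrArg (fun s : (node j m children).Strategy j => s.1 rfl) (Function.update_self j _ σ)
  rw [outcome_node_of_rootMove_eq hmove, childProfile_update]
  rfl

theorem outcome_mem_leavesList : ∀ (G : ExtGame ι) (σ : ∀ i, G.Strategy i),
    G.outcome σ ∈ G.leavesList
  | .leaf _, _ => List.mem_singleton_self _
  | .node j _ _, σ =>
      List.mem_flatten.2 ⟨_, List.mem_ofFn.2 ⟨(σ j).1 rfl, rfl⟩, outcome_mem_leavesList _ _⟩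

theorem NoRelevantTies.outcome_ne (h : (node j m children).NoRelevantTies) {c c' : Fin (m + 1)}
    (hc : c ≠ c') (σ : ∀ i, (children c).Strategy i) (σ' : ∀ i, (children c').Strategy i) :
    (children c).outcome σ j ≠ (children c').outcome σ' j := by
  have hpair := List.pairwise_flatten.1 h.1
  have hofFn := List.pairwise_ofFn.1 hpair.2
  rcases hc.lt_or_gt with hlt | hlt
  · exact hofFn hlt _ (outcome_mem_leavesList _ σ) _ (outcome_mem_leavesList _ σ')
  · exact (hofFn hlt _ (outcome_mem_leavesList _ σ') _ (outcome_mem_leavesList _ σ)).symm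

theorem SPE.child [DecidableEq ι] {σ : ∀ i, (node j m children).Strategy i}
    (h : (node j m children).SPE σ) (c : Fin (m + 1)) : (children c).SPE (childProfile σ c) :=
  fun v => h (.child c v)

theorem SPE.outcome_lt [DecidableEq ι] {σ : ∀ i, (node j m children).Strategy i}
    (h : (node j m children).SPE σ) (hties : (node j m children).NoRelevantTies)
    {c : Fin (m + 1)} (hc : c ≠ (σ j).1 rfl) :
    (children c).outcome (childProfile σ c) j <
      (children ((σ j).1 rfl)).outcome (childProfile σ ((σ j).1 rfl)) j := by
  have hle : (node j m children).outcome (Function.update σ j (.ofRootMove c (σ j).2)) j ≤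
      (node j m children).outcome σ j :=
    h (.root _) j _
  rw [outcome_update_ofRootMove, update_childProfile_self] at hle
  exact lt_of_le_of_ne hle (hties.outcome_ne hc _ _)

end ExtGame

section Knowledge

variable {n : ℕ} {Ω : Type} (P : Fin n → Setoid Ω)

def IsSelfEvident (C : Set Ω) : Prop :=
  C ⊆ KnowAll P C

variable {P}

theorem IsSelfEvident.mem_of_rel {C : Set Ω} (hC : IsSelfEvident P C) {i : Fin n} {ω ω' : Ω}
    (hω : ω ∈ C) (hr : (P i).r ω ω') : ω' ∈ C :=
  Set.mem_iInter.1 (hC hω) i ω' hr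

theorem know_subset (i : Fin n) (E : Set Ω) : Know P i E ⊆ E :=
  fun ω hω => hω ω ((P i).refl ω)

theorem CK_subset_know (i : Fin n) (E : Set Ω) : CK P E ⊆ Know P i E := by
  intro ω hω
  have h : ω ∈ (KnowAll P)^[0 + 1] E := Set.mem_iInter.1 hω 0
  exact Set.mem_iInter.1 h i

theorem isSelfEvident_CK (E : Set Ω) : IsSelfEvident P (CK P E) := by
  intro ω hω
  refine Set.mem_iInter.2 fun i ω' hr => Set.mem_iInter.2 fun k => ?_
  have h : ω ∈ KnowAll P ((KnowAll P)^[k + 1] E) := by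
    rw [← Function.iterate_succ_apply' (KnowAll P)]
    exact Set.mem_iInter.1 hω (k + 1)
  exact Set.mem_iInter.1 h i ω' hr

end Knowledge

namespace ExtGame

variable {n : ℕ} {Ω : Type} {P : Fin n → Setoid Ω} {G : ExtGame (Fin n)} {j : Fin n} {m : ℕ}
  {children : Fin (m + 1) → ExtGame (Fin n)}

theorem rational_childProfile {st : Ω → ∀ i, (node j m children).Strategy i} {i : Fin n}
    {ω : Ω} (h : ω ∈ Rational (node j m children) P st i) (c : Fin (m + 1)) :
    ω ∈ Rational (children c) P (fun ω' => childProfile (st ω') c) i := by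
  intro v hv t hknow
  refine h (.child c v) hv ((st ω i).updateChild c t) fun ω' hr => ?_
  have hgt := hknow ω' hr
  change (subgameAt v).outcome
      (restrictProfile (childProfile (Function.update (st ω') i ((st ω i).updateChild c t)) c) v) i >
    (subgameAt v).outcome (restrictProfile (childProfile (st ω') c) v) i
  rwa [childProfile_update, Strategy.updateChild_snd_self]

theorem rootMove_eq_of_rational {sstar : ∀ i, (node j m children).Strategy i}
    {st : Ω → ∀ i, (node j m children).Strategy i} {C : Set Ω}
    (hties : (node j m children).NoRelevantTies) (hspe : (node j m children).SPE sstar)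
    (hown : ∀ ω ω', (P j).r ω ω' → st ω j = st ω' j) (hC : IsSelfEvident P C)
    (hchild : ∀ ω ∈ C, ∀ c, childProfile (st ω) c = childProfile sstar c)
    {ω : Ω} (hω : ω ∈ C) (hR : ω ∈ Rational (node j m children) P st j) :
    (st ω j).1 rfl = (sstar j).1 rfl := by
  by_contra hne
  refine hR (.root _) rfl (.ofRootMove ((sstar j).1 rfl) (sstar j).2) fun ω' hr => ?_
  have hω' := hchild ω' (hC.mem_of_rel hω hr)
  show (node j m children).outcome (Function.update (st ω') j _) j >
    (node j m children).outcome (st ω') j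
  rw [outcome_update_ofRootMove, hω', update_childProfile_self, outcome_node, hω', ← hown ω ω' hr]
  exact hspe.outcome_lt hties hne

theorem eq_of_isSelfEvident_subset_rational {sstar : ∀ i, G.Strategy i}
    {st : Ω → ∀ i, G.Strategy i} {C : Set Ω} (hties : G.NoRelevantTies) (hspe : G.SPE sstar)
    (hown : ∀ i ω ω', (P i).r ω ω' → st ω i = st ω' i) (hC : IsSelfEvident P C)
    (hR : ∀ i, C ⊆ Rational G P st i) {ω : Ω} (hω : ω ∈ C) : st ω = sstar := by
  induction G generalizing ω with
  | leaf _ => exact funext fun _ => rfl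
  | node j m children ih =>
    have hchild : ∀ ω ∈ C, ∀ c, childProfile (st ω) c = childProfile sstar c :=
      fun ω hω c => ih c (hties.2 c) (hspe.child c)
        (fun i ω₁ ω₂ hr => congrArg (fun s => s.2 c) (hown i ω₁ ω₂ hr))
        (fun i _ hω' => rational_childProfile (hR i hω') c) hω
    exact profile_ext (rootMove_eq_of_rational hties hspe (hown j) hC hchild hω (hR j hω))
      (hchild ω hω)

end ExtGame

theorem aumann_ckr_general {n : ℕ} (G : ExtGame (Fin n)) (hties : G.NoRelevantTies)
    (sstar : ∀ i, G.Strategy i) (hspe : G.SPE sstar)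
    (Ω : Type) (P : Fin n → Setoid Ω)
    (st : Ω → ∀ i, G.Strategy i)
    (hown : ∀ (i : Fin n) (ω ω' : Ω), (P i).r ω ω' → st ω i = st ω' i) :
    CK P (⋂ i : Fin n, Rational G P st i) ⊆ {ω | st ω = sstar} :=
  fun _ hω => ExtGame.eq_of_isSelfEvident_subset_rational hties hspe hown (isSelfEvident_CK _)
    (fun i => (CK_subset_know i _).trans ((know_subset i _).trans (Set.iInter_subset _ i))) hω

/-- (Aumann) Let `G` be a finite extensive game with perfect information and without relevant
ties, with unique subgame perfect equilibrium `s*`, and consider any knowledge system for `G`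
(states `Ω`, information partitions `P i`, strategy function `st`, each player knowing his own
strategy). Then `CK R ⊆ I`: common knowledge of rationality implies that the players' joint
strategy is the backward induction strategy `s*`. -/
theorem aumann_ckr {n : ℕ} (G : ExtGame (Fin n)) (hties : G.NoRelevantTies)
    (sstar : ∀ i, G.Strategy i) (hspe : G.SPE sstar)
    (huniq : ∀ t : ∀ i, G.Strategy i, G.SPE t → t = sstar)
    (Ω : Type) (hΩ : Nonempty Ω) (P : Fin n → Setoid Ω)
    (st : Ω → ∀ i, G.Strategy i)
    (hown : ∀ (i : Fin n) (ω ω' : Ω), (P i).r ω ω' → st ω i = st ω' i) :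
    CK P (⋂ i : Fin n, Rational G P st i) ⊆ {ω | st ω = sstar} :=
  aumann_ckr_general G hties sstar hspe Ω P st hown
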